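/- arXiv:2306.02186 — 2 statements merged into one kernel-verified Lean document; each statement's English description precedes it below -/
import Mathlib

section
/- Define for x > 0: F₂(x) = (3/x²)·(1 - tanh(x)/x) and F₄(x) = (2/x²)·(1 - sech(x)). Then F₂ and F₄ extend continuously to x = 0 with F₂(0) = F₄(0) = 1, and both satisfy 0 ≤ F₂(x) ≤ 1 and 0 ≤ F₄(x) ≤ 1 for all x ≥ 0. -/
/-!
Clearing denominators, `F₂ x = 3 (x cosh x - sinh x) / (x³ cosh x)` and
`F₄ x = 2 (cosh x - 1) / (x² cosh x)`. The elementary inequalities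
`x³/3 ≤ x cosh x - sinh x ≤ (x³/3) cosh x` and `x²/2 ≤ cosh x - 1 ≤ (x²/2) cosh x` for `x ≥ 0`,
each proved by checking the sign of a derivative, squeeze both functions between `sech x` and `1`.
Since `sech x → 1` as `x → 0`, both the bounds and the limits follow.
-/

open Real Set Filter Topology

lemma monotoneOn_Ici_of_hasDerivAt_nonneg {a : ℝ} {f f' : ℝ → ℝ}
    (hf : ∀ x, HasDerivAt f (f' x) x) (hf' : ∀ x, a < x → 0 ≤ f' x) :
    MonotoneOn f (Ici a) :=
  monotoneOn_of_hasDerivWithinAt_nonneg (convex_Ici a)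
    (fun x _ ↦ (hf x).continuousAt.continuousWithinAt)
    (fun x _ ↦ (hf x).hasDerivWithinAt)
    (fun x hx ↦ hf' x (by rwa [interior_Ici] at hx))

namespace Real

variable {x : ℝ}

lemma sinh_le_mul_cosh (hx : 0 ≤ x) : sinh x ≤ x * cosh x := by
  have hmono := monotoneOn_Ici_of_hasDerivAt_nonneg (f := fun y ↦ y * cosh y - sinh y)
    (f' := fun y ↦ y * sinh y)
    (fun y ↦ by
      refine (((hasDerivAt_id y).mul (hasDerivAt_cosh y)).sub (hasDerivAt_sinh y)).congr_deriv ?_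
      simp only [id_eq]; ring)
    (fun y hy ↦ mul_nonneg hy.le (sinh_nonneg_iff.mpr hy.le))
  linarith [hmono self_mem_Ici hx hx, sinh_zero]

lemma cube_div_three_le_mul_cosh_sub_sinh (hx : 0 ≤ x) :
    x ^ 3 / 3 ≤ x * cosh x - sinh x := by
  have hmono := monotoneOn_Ici_of_hasDerivAt_nonneg
    (f := fun y ↦ y * cosh y - sinh y - y ^ 3 / 3) (f' := fun y ↦ y * (sinh y - y))
    (fun y ↦ by
      refine ((((hasDerivAt_id y).mul (hasDerivAt_cosh y)).sub (hasDerivAt_sinh y)).sub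
        ((hasDerivAt_pow 3 y).div_const 3)).congr_deriv ?_
      simp only [id_eq]; push_cast; ring)
    (fun y hy ↦ mul_nonneg hy.le (sub_nonneg.mpr (self_le_sinh_iff.mpr hy.le)))
  linarith [hmono self_mem_Ici hx hx, sinh_zero, cosh_zero]

lemma mul_cosh_sub_sinh_le_cube_div_three_mul_cosh (hx : 0 ≤ x) :
    x * cosh x - sinh x ≤ x ^ 3 / 3 * cosh x := by
  have hmono := monotoneOn_Ici_of_hasDerivAt_nonneg
    (f := fun y ↦ y ^ 3 / 3 * cosh y - y * cosh y + sinh y)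
    (f' := fun y ↦ y * (y * cosh y - sinh y) + y ^ 3 / 3 * sinh y)
    (fun y ↦ by
      refine (((((hasDerivAt_pow 3 y).div_const 3).mul (hasDerivAt_cosh y)).sub
        ((hasDerivAt_id y).mul (hasDerivAt_cosh y))).add (hasDerivAt_sinh y)).congr_deriv ?_
      simp only [id_eq]; push_cast; ring)
    (fun y hy ↦ add_nonneg (mul_nonneg hy.le (sub_nonneg.mpr (sinh_le_mul_cosh hy.le)))
      (mul_nonneg (by positivity) (sinh_nonneg_iff.mpr hy.le)))
  linarith [hmono self_mem_Ici hx hx, sinh_zero, cosh_zero]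

lemma sq_div_two_le_cosh_sub_one (x : ℝ) : x ^ 2 / 2 ≤ cosh x - 1 := by
  wlog hx : 0 ≤ x generalizing x
  · simpa only [even_two, Even.neg_pow, cosh_neg] using this (-x) (by linarith)
  have hmono := monotoneOn_Ici_of_hasDerivAt_nonneg (f := fun y ↦ cosh y - y ^ 2 / 2)
    (f' := fun y ↦ sinh y - y)
    (fun y ↦ by
      refine ((hasDerivAt_cosh y).sub ((hasDerivAt_pow 2 y).div_const 2)).congr_deriv ?_
      push_cast; ring)
    (fun y hy ↦ sub_nonneg.mpr (self_le_sinh_iff.mpr hy.le))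
  linarith [hmono self_mem_Ici hx hx, sinh_zero, cosh_zero]

lemma cosh_sub_one_le_sq_div_two_mul_cosh (x : ℝ) : cosh x - 1 ≤ x ^ 2 / 2 * cosh x := by
  wlog hx : 0 ≤ x generalizing x
  · simpa only [even_two, Even.neg_pow, cosh_neg] using this (-x) (by linarith)
  have hmono := monotoneOn_Ici_of_hasDerivAt_nonneg
    (f := fun y ↦ y ^ 2 / 2 * cosh y - cosh y)
    (f' := fun y ↦ (y * cosh y - sinh y) + y ^ 2 / 2 * sinh y)
    (fun y ↦ by
      refine ((((hasDerivAt_pow 2 y).div_const 2).mul (hasDerivAt_cosh y)).sub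
        (hasDerivAt_cosh y)).congr_deriv ?_
      push_cast; ring)
    (fun y hy ↦ add_nonneg (sub_nonneg.mpr (sinh_le_mul_cosh hy.le))
      (mul_nonneg (by positivity) (sinh_nonneg_iff.mpr hy.le)))
  linarith [hmono self_mem_Ici hx hx, sinh_zero, cosh_zero]

lemma tendsto_inv_cosh_nhdsGT_zero : Tendsto (fun x ↦ (cosh x)⁻¹) (𝓝[>] 0) (𝓝 1) := by
  have hcont : Continuous fun x ↦ (cosh x)⁻¹ :=
    continuous_cosh.inv₀ fun x ↦ (cosh_pos x).ne'
  simpa only [cosh_zero, inv_one] using (hcont.tendsto 0).mono_left nhdsWithin_le_nhds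

end Real

namespace WhithamGreenNaghdi

noncomputable def F₂ (x : ℝ) : ℝ := 3 / x ^ 2 * (1 - tanh x / x)

noncomputable def F₄ (x : ℝ) : ℝ := 2 / x ^ 2 * (1 - 1 / cosh x)

variable {x : ℝ}

lemma F₂_eq (hx : x ≠ 0) : F₂ x = 3 * (x * cosh x - sinh x) / (x ^ 3 * cosh x) := by
  have := (cosh_pos x).ne'
  rw [F₂, tanh_eq_sinh_div_cosh]
  field_simp

lemma F₄_eq (hx : x ≠ 0) : F₄ x = 2 * (cosh x - 1) / (x ^ 2 * cosh x) := by
  have := (cosh_pos x).ne'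
  rw [F₄]
  field_simp

lemma inv_cosh_le_F₂ (hx : 0 < x) : (cosh x)⁻¹ ≤ F₂ x := by
  rw [F₂_eq hx.ne', ← one_div, div_le_div_iff₀ (cosh_pos x) (by positivity)]
  nlinarith [cube_div_three_le_mul_cosh_sub_sinh hx.le, cosh_pos x]

lemma F₂_le_one (hx : 0 < x) : F₂ x ≤ 1 := by
  rw [F₂_eq hx.ne', div_le_one (by positivity)]
  linarith [mul_cosh_sub_sinh_le_cube_div_three_mul_cosh hx.le]

lemma inv_cosh_le_F₄ (hx : x ≠ 0) : (cosh x)⁻¹ ≤ F₄ x := by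
  rw [F₄_eq hx, ← one_div, div_le_div_iff₀ (cosh_pos x) (by positivity)]
  nlinarith [sq_div_two_le_cosh_sub_one x, cosh_pos x]

lemma F₄_le_one (hx : x ≠ 0) : F₄ x ≤ 1 := by
  rw [F₄_eq hx, div_le_one (by positivity)]
  linarith [cosh_sub_one_le_sq_div_two_mul_cosh x]

lemma tendsto_nhdsGT_zero_of_inv_cosh_le_of_le_one {g : ℝ → ℝ}
    (hlow : ∀ x, 0 < x → (cosh x)⁻¹ ≤ g x) (hup : ∀ x, 0 < x → g x ≤ 1) :
    Tendsto g (𝓝[>] 0) (𝓝 1) :=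
  tendsto_of_tendsto_of_tendsto_of_le_of_le' tendsto_inv_cosh_nhdsGT_zero tendsto_const_nhds
    (eventually_nhdsWithin_of_forall hlow) (eventually_nhdsWithin_of_forall hup)

lemma mem_Icc_of_inv_cosh_le_of_le_one {y : ℝ} (hlow : (cosh x)⁻¹ ≤ y) (hup : y ≤ 1) :
    y ∈ Icc (0 : ℝ) 1 :=
  ⟨(inv_pos.mpr (cosh_pos x)).le.trans hlow, hup⟩

end WhithamGreenNaghdi

open WhithamGreenNaghdi in
/-- For `x > 0` set `F₂(x) = (3/x²)(1 - tanh x / x)` and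
`F₄(x) = (2/x²)(1 - sech x)`. Then `F₂`, `F₄` extend continuously to `x = 0` with
value `1`, and both take values in `[0,1]` for all `x ≥ 0`. -/
theorem stmt11 :
    Filter.Tendsto (fun x : ℝ => 3 / x ^ 2 * (1 - Real.tanh x / x))
      (nhdsWithin 0 (Set.Ioi 0)) (nhds 1) ∧
    Filter.Tendsto (fun x : ℝ => 2 / x ^ 2 * (1 - 1 / Real.cosh x))
      (nhdsWithin 0 (Set.Ioi 0)) (nhds 1) ∧
    (∀ x : ℝ, 0 < x → 3 / x ^ 2 * (1 - Real.tanh x / x) ∈ Set.Icc (0 : ℝ) 1) ∧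
    (∀ x : ℝ, 0 < x → 2 / x ^ 2 * (1 - 1 / Real.cosh x) ∈ Set.Icc (0 : ℝ) 1) :=
  ⟨tendsto_nhdsGT_zero_of_inv_cosh_le_of_le_one (fun _ ↦ inv_cosh_le_F₂) (fun _ ↦ F₂_le_one),
    tendsto_nhdsGT_zero_of_inv_cosh_le_of_le_one (fun _ hx ↦ inv_cosh_le_F₄ hx.ne')
      (fun _ hx ↦ F₄_le_one hx.ne'),
    fun _ hx ↦ mem_Icc_of_inv_cosh_le_of_le_one (inv_cosh_le_F₂ hx) (F₂_le_one hx),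
    fun _ hx ↦ mem_Icc_of_inv_cosh_le_of_le_one (inv_cosh_le_F₄ hx.ne') (F₄_le_one hx.ne')⟩
end

section
/- For all a ≥ 0 and z ∈ [-1, 0]: the symbol of ∂_z F₀, namely n(ξ) = √μ|ξ|·sinh((z+1)√μ|ξ|)/cosh(√μ|ξ|), satisfies 0 ≤ n(ξ) ≤ μ|ξ|²·(z+1)·(cosh((z+1)√μ|ξ|)/cosh(√μ|ξ|)) ≤ μ|ξ|². In particular |∂_z F₀ u(·,z)|_{H^s} ≤ μ|∇u|_{H^{s+1}}. -/
/-! With `b = √μ|ξ|` and `t = z + 1 ∈ [0,1]`, the bounds on the symbol come from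
`sinh b ≤ b cosh b` (compare the Taylor series termwise) applied at `t b`, and from
`cosh (t b) ≤ cosh b`. Squaring `n(ξ) ≤ μ|ξ|²` and using `|ξ|² ≤ 1 + |ξ|²` then gives the
weighted `L²` bound on the Fourier side. -/

open MeasureTheory Real

theorem Real.sinh_le_mul_cosh_s15 {b : ℝ} (hb : 0 ≤ b) : sinh b ≤ b * cosh b := by
  refine hasSum_le (fun n => ?_) (hasSum_sinh b) ((hasSum_cosh b).mul_left b)
  have hfac : ((2 * n).factorial : ℝ) ≤ (2 * n + 1).factorial := by
    exact_mod_cast Nat.factorial_le (Nat.le_succ _)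
  calc b ^ (2 * n + 1) / ((2 * n + 1).factorial : ℝ)
      ≤ b ^ (2 * n + 1) / ((2 * n).factorial : ℝ) := by gcongr
    _ = b * (b ^ (2 * n) / ((2 * n).factorial : ℝ)) := by ring

section FlatStripSymbol

variable {t b : ℝ}

lemma mul_sinh_mul_div_cosh_nonneg (ht : 0 ≤ t) (hb : 0 ≤ b) :
    0 ≤ b * (sinh (t * b) / cosh b) :=
  mul_nonneg hb (div_nonneg (sinh_nonneg_iff.mpr (mul_nonneg ht hb)) (cosh_pos b).le)

lemma mul_sinh_mul_div_cosh_le (ht : 0 ≤ t) (hb : 0 ≤ b) :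
    b * (sinh (t * b) / cosh b) ≤ b ^ 2 * t * (cosh (t * b) / cosh b) := by
  rw [mul_div_assoc', mul_div_assoc', div_le_div_iff_of_pos_right (cosh_pos b)]
  calc b * sinh (t * b) ≤ b * (t * b * cosh (t * b)) := by
        gcongr
        exact sinh_le_mul_cosh_s15 (mul_nonneg ht hb)
    _ = b ^ 2 * t * cosh (t * b) := by ring

lemma sq_mul_mul_cosh_div_cosh_le (ht₀ : 0 ≤ t) (ht₁ : t ≤ 1) :
    b ^ 2 * t * (cosh (t * b) / cosh b) ≤ b ^ 2 := by
  have hcosh : cosh (t * b) / cosh b ≤ 1 := by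
    rw [div_le_one (cosh_pos b), cosh_le_cosh, abs_mul]
    exact mul_le_of_le_one_left (abs_nonneg b) (abs_le.mpr ⟨by linarith, ht₁⟩)
  calc b ^ 2 * t * (cosh (t * b) / cosh b) = b ^ 2 * (t * (cosh (t * b) / cosh b)) := by ring
    _ ≤ b ^ 2 * 1 := by
        gcongr
        exact mul_le_one₀ ht₁ (div_nonneg (cosh_pos _).le (cosh_pos b).le) hcosh
    _ = b ^ 2 := mul_one _

end FlatStripSymbol

lemma sqrt_mul_sinh_div_cosh_bounds {μ t r : ℝ} (hμ : 0 ≤ μ) (ht₀ : 0 ≤ t) (ht₁ : t ≤ 1)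
    (hr : 0 ≤ r) :
    0 ≤ √μ * r * (sinh (t * (√μ * r)) / cosh (√μ * r)) ∧
    √μ * r * (sinh (t * (√μ * r)) / cosh (√μ * r))
      ≤ μ * r ^ 2 * t * (cosh (t * (√μ * r)) / cosh (√μ * r)) ∧
    μ * r ^ 2 * t * (cosh (t * (√μ * r)) / cosh (√μ * r)) ≤ μ * r ^ 2 := by
  have hb : 0 ≤ √μ * r := by positivity
  rw [show μ * r ^ 2 = (√μ * r) ^ 2 by rw [mul_pow, sq_sqrt hμ]]
  exact ⟨mul_sinh_mul_div_cosh_nonneg ht₀ hb, mul_sinh_mul_div_cosh_le ht₀ hb,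
    sq_mul_mul_cosh_div_cosh_le ht₀ ht₁⟩

lemma rpow_mul_sq_mul_le_sq_mul_rpow_add_one {n m r s c : ℝ} (hn₀ : 0 ≤ n)
    (hn : n ≤ m * r ^ 2) (hc : 0 ≤ c) :
    (1 + r ^ 2) ^ s * n ^ 2 * c ≤ m ^ 2 * ((1 + r ^ 2) ^ (s + 1) * r ^ 2 * c) := by
  have hpos : (0 : ℝ) < 1 + r ^ 2 := by positivity
  calc (1 + r ^ 2) ^ s * n ^ 2 * c ≤ (1 + r ^ 2) ^ s * (m * r ^ 2) ^ 2 * c := by gcongr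
    _ = m ^ 2 * ((1 + r ^ 2) ^ s * r ^ 2 * r ^ 2 * c) := by ring
    _ ≤ m ^ 2 * ((1 + r ^ 2) ^ s * (1 + r ^ 2) * r ^ 2 * c) := by gcongr; linarith
    _ = m ^ 2 * ((1 + r ^ 2) ^ (s + 1) * r ^ 2 * c) := by rw [rpow_add_one hpos.ne']

/-- for `μ ∈ [0,1]`, `z ∈ [-1,0]`, the symbol of `∂_z F₀`,
`n(ξ) = √μ|ξ|·sinh((z+1)√μ|ξ|)/cosh(√μ|ξ|)`, satisfies
`0 ≤ n(ξ) ≤ μ|ξ|²(z+1)·cosh((z+1)√μ|ξ|)/cosh(√μ|ξ|) ≤ μ|ξ|²`; in particular on the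
Fourier side `|∂_z F₀ u(·,z)|_{H^s} ≤ μ|∇u|_{H^{s+1}}`. -/
theorem stmt15 {d : ℕ} (μ z s : ℝ) (hμ : μ ∈ Set.Icc (0:ℝ) 1)
    (hz : z ∈ Set.Icc (-1 : ℝ) 0) :
    (∀ ξ : EuclideanSpace ℝ (Fin d),
      0 ≤ Real.sqrt μ * ‖ξ‖ *
          (Real.sinh ((z + 1) * (Real.sqrt μ * ‖ξ‖)) / Real.cosh (Real.sqrt μ * ‖ξ‖)) ∧
      Real.sqrt μ * ‖ξ‖ *
          (Real.sinh ((z + 1) * (Real.sqrt μ * ‖ξ‖)) / Real.cosh (Real.sqrt μ * ‖ξ‖))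
        ≤ μ * ‖ξ‖ ^ 2 * (z + 1) *
            (Real.cosh ((z + 1) * (Real.sqrt μ * ‖ξ‖)) / Real.cosh (Real.sqrt μ * ‖ξ‖)) ∧
      μ * ‖ξ‖ ^ 2 * (z + 1) *
          (Real.cosh ((z + 1) * (Real.sqrt μ * ‖ξ‖)) / Real.cosh (Real.sqrt μ * ‖ξ‖))
        ≤ μ * ‖ξ‖ ^ 2) ∧
    ∀ u : EuclideanSpace ℝ (Fin d) → ℂ,
      Integrable (fun ξ : EuclideanSpace ℝ (Fin d) =>
        (1 + ‖ξ‖ ^ 2) ^ (s + 1) * ‖ξ‖ ^ 2 * ‖FourierTransform.fourier u ξ‖ ^ 2) →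
      (∫ ξ : EuclideanSpace ℝ (Fin d),
          (1 + ‖ξ‖ ^ 2) ^ s *
            (Real.sqrt μ * ‖ξ‖ *
              (Real.sinh ((z + 1) * (Real.sqrt μ * ‖ξ‖)) / Real.cosh (Real.sqrt μ * ‖ξ‖))) ^ 2 *
            ‖FourierTransform.fourier u ξ‖ ^ 2)
        ≤ μ ^ 2 * ∫ ξ : EuclideanSpace ℝ (Fin d),
            (1 + ‖ξ‖ ^ 2) ^ (s + 1) * ‖ξ‖ ^ 2 * ‖FourierTransform.fourier u ξ‖ ^ 2 := by
  have ht₀ : 0 ≤ z + 1 := by linarith [hz.1]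
  have ht₁ : z + 1 ≤ 1 := by linarith [hz.2]
  have hsymbol (ξ : EuclideanSpace ℝ (Fin d)) :=
    sqrt_mul_sinh_div_cosh_bounds hμ.1 ht₀ ht₁ (norm_nonneg ξ)
  refine ⟨hsymbol, fun u hint => ?_⟩
  rw [← integral_const_mul]
  refine integral_mono_of_nonneg (ae_of_all _ fun ξ => by positivity) (hint.const_mul _)
    (ae_of_all _ fun ξ => ?_)
  obtain ⟨hn₀, hn₁, hn₂⟩ := hsymbol ξ
  exact rpow_mul_sq_mul_le_sq_mul_rpow_add_one hn₀ (hn₁.trans hn₂) (sq_nonneg _)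
end
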